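/- Define F(s) = 2σ²e^{sσ}(1 - cos(sν)) - ν²(1 - e^{sσ})². Then for σ, ν > 0, F is strictly increasing on (-∞, 0) and strictly decreasing on (0, +∞); in particular F(s) < F(0) = 0 for all s ≠ 0. -/

import Mathlib

/-!
Differentiating, `F' s = 2σ e^{2sσ} (Q s - Q 0)` where
`Q s = e^{-sσ} (σ² (1 - cos (sν)) + σν sin (sν) + ν²)` (`weightedOscillation`), and in `Q'` all
terms other than multiples of `1 - cos (sν)` cancel: `Q' s = -σ (σ² + ν²) e^{-sσ} (1 - cos (sν))`.
So `Q' ≤ 0` with zeros only in the countable set `(2π/ν) ℤ`, hence `Q` is strictly antitone and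
`F'` has the sign of `-s`.
-/

open Real Set Filter Topology

theorem strictAnti_of_hasDerivAt_nonpos_of_countable {f f' : ℝ → ℝ}
    (hf : ∀ x, HasDerivAt f (f' x) x) (hf' : f' ≤ 0) (hzero : {x | f' x = 0}.Countable) :
    StrictAnti f := by
  have hanti := antitone_of_hasDerivAt_nonpos hf hf'
  intro a b hab
  refine (hanti hab.le).lt_of_ne fun hba => ?_
  obtain ⟨c, hc, hac, hcb⟩ := (hzero.dense_compl ℝ).exists_between hab
  have hconst : f =ᶠ[𝓝 c] fun _ => f a := by
    filter_upwards [Icc_mem_nhds hac hcb] with x hx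
    exact le_antisymm (hanti hx.1) (hba ▸ hanti hx.2)
  exact hc ((hf c).unique ((hasDerivAt_const c (f a)).congr_of_eventuallyEq hconst))

theorem countable_setOf_cos_mul_eq_one {ν : ℝ} (hν : ν ≠ 0) :
    {x : ℝ | cos (x * ν) = 1}.Countable := by
  refine (countable_range fun n : ℤ => n * (2 * π) / ν).mono fun x hx => ?_
  obtain ⟨n, hn⟩ := (cos_eq_one_iff _).1 hx
  exact ⟨n, by simp only [hn, mul_div_cancel_right₀ _ hν]⟩

noncomputable def weightedOscillation (σ ν s : ℝ) : ℝ :=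
  exp (-(s * σ)) * (σ ^ 2 * (1 - cos (s * ν)) + σ * ν * sin (s * ν) + ν ^ 2)

theorem weightedOscillation_zero (σ ν : ℝ) : weightedOscillation σ ν 0 = ν ^ 2 := by
  simp [weightedOscillation]

theorem hasDerivAt_weightedOscillation (σ ν s : ℝ) :
    HasDerivAt (weightedOscillation σ ν)
      (-(σ * (σ ^ 2 + ν ^ 2) * exp (-(s * σ)) * (1 - cos (s * ν)))) s := by
  have hexp : HasDerivAt (fun s => exp (-(s * σ))) (exp (-(s * σ)) * -σ) s :=
    (hasDerivAt_mul_const σ).neg.exp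
  have hcos : HasDerivAt (fun s => cos (s * ν)) (-sin (s * ν) * ν) s :=
    (hasDerivAt_mul_const ν).cos
  have hsin : HasDerivAt (fun s => sin (s * ν)) (cos (s * ν) * ν) s :=
    (hasDerivAt_mul_const ν).sin
  have hbody : HasDerivAt (fun s => σ ^ 2 * (1 - cos (s * ν)) + σ * ν * sin (s * ν) + ν ^ 2)
      (σ ^ 2 * -(-sin (s * ν) * ν) + σ * ν * (cos (s * ν) * ν)) s :=
    (((hcos.const_sub 1).const_mul (σ ^ 2)).add (hsin.const_mul (σ * ν))).add_const (ν ^ 2)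
  exact (hexp.mul hbody).congr_deriv (by ring)

theorem weightedOscillation_strictAnti {σ ν : ℝ} (hσ : 0 < σ) (hν : ν ≠ 0) :
    StrictAnti (weightedOscillation σ ν) := by
  have hfactor (s : ℝ) : 0 < σ * (σ ^ 2 + ν ^ 2) * exp (-(s * σ)) := by positivity
  refine strictAnti_of_hasDerivAt_nonpos_of_countable (hasDerivAt_weightedOscillation σ ν)
    (fun s => neg_nonpos.2 (mul_nonneg (hfactor s).le (sub_nonneg.2 (cos_le_one _))))
    ((countable_setOf_cos_mul_eq_one hν).mono fun s hs => ?_)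
  exact (sub_eq_zero.1 ((mul_eq_zero.1 (neg_eq_zero.1 hs)).resolve_left (hfactor s).ne')).symm

noncomputable def gapFunction (σ ν s : ℝ) : ℝ :=
  2 * σ ^ 2 * exp (s * σ) * (1 - cos (s * ν)) - ν ^ 2 * (1 - exp (s * σ)) ^ 2

theorem gapFunction_zero (σ ν : ℝ) : gapFunction σ ν 0 = 0 := by
  simp [gapFunction]

theorem hasDerivAt_gapFunction (σ ν s : ℝ) :
    HasDerivAt (gapFunction σ ν)
      (2 * σ * exp (s * σ) ^ 2 * (weightedOscillation σ ν s - weightedOscillation σ ν 0)) s := by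
  have hexp : HasDerivAt (fun s => exp (s * σ)) (exp (s * σ) * σ) s :=
    (hasDerivAt_mul_const σ).exp
  have hcos : HasDerivAt (fun s => cos (s * ν)) (-sin (s * ν) * ν) s :=
    (hasDerivAt_mul_const ν).cos
  refine (((hexp.const_mul (2 * σ ^ 2)).mul (hcos.const_sub 1)).sub
    (((hexp.const_sub 1).pow 2).const_mul (ν ^ 2))).congr_deriv ?_
  rw [weightedOscillation_zero, weightedOscillation, exp_neg]
  field_simp
  ring

theorem stmt1 (σ ν : ℝ) (hσ : 0 < σ) (hν : 0 < ν) (F : ℝ → ℝ)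
    (hF : ∀ s, F s = 2 * σ ^ 2 * Real.exp (s * σ) * (1 - Real.cos (s * ν)) -
      ν ^ 2 * (1 - Real.exp (s * σ)) ^ 2) :
    StrictMonoOn F (Set.Iio 0) ∧ StrictAntiOn F (Set.Ioi 0) ∧
      F 0 = 0 ∧ ∀ s ≠ 0, F s < F 0 := by
  obtain rfl : F = gapFunction σ ν := funext hF
  have hQ := weightedOscillation_strictAnti hσ hν.ne'
  have hderiv := hasDerivAt_gapFunction σ ν
  have hcont : Continuous (gapFunction σ ν) :=
    continuous_iff_continuousAt.2 fun s => (hderiv s).continuousAt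
  have hmono : StrictMonoOn (gapFunction σ ν) (Iic 0) := by
    refine strictMonoOn_of_hasDerivWithinAt_pos (convex_Iic 0) hcont.continuousOn
      (fun s _ => (hderiv s).hasDerivWithinAt) fun s hs => ?_
    rw [interior_Iic] at hs
    exact mul_pos (by positivity) (sub_pos.2 (hQ hs))
  have hanti : StrictAntiOn (gapFunction σ ν) (Ici 0) := by
    refine strictAntiOn_of_hasDerivWithinAt_neg (convex_Ici 0) hcont.continuousOn
      (fun s _ => (hderiv s).hasDerivWithinAt) fun s hs => ?_
    rw [interior_Ici] at hs
    exact mul_neg_of_pos_of_neg (by positivity) (sub_neg.2 (hQ hs))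
  refine ⟨hmono.mono Iio_subset_Iic_self, hanti.mono Ioi_subset_Ici_self, gapFunction_zero σ ν,
    fun s hs => ?_⟩
  rcases hs.lt_or_gt with hs | hs
  · exact hmono hs.le self_mem_Iic hs
  · exact hanti self_mem_Ici hs.le hs
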